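/- arXiv:hep-th/9901114 — 3 statements merged into one kernel-verified Lean document; each statement's English description precedes it below -/
import Mathlib

section
/- Let e, p, q ∈ ℂ^N be unit vectors with ⟨p, q⟩ ≠ 0. There exists t ∈ [0,1] such that ⟨e, (1-t)·⟨p,q⟩·p + t·|⟨p,q⟩|²·q⟩ = 0 if and only if Re(⟨e,p⟩·⟨p,q⟩·⟨q,e⟩) ≤ 0 and Im(⟨e,p⟩·⟨p,q⟩·⟨q,e⟩) = 0. -/
/-!
Applying `⟨e, ·⟩` maps the curve onto the real segment from `x = ⟨p,q⟩⟨e,p⟩` to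
`y = |⟨p,q⟩|²⟨e,q⟩`. The origin lies on a segment `[x, y]` iff `-x` and `y` lie on a common
ray, i.e. iff `x * conj y` is a nonpositive real number; and here
`x * conj y = |⟨p,q⟩|² ⟨e,p⟩⟨p,q⟩⟨q,e⟩` with `|⟨p,q⟩|² > 0`.
-/

open scoped ComplexConjugate

/-- Standard Hermitian inner product on ℂ^N, conjugate-linear in the first argument. -/
noncomputable def herm {N : ℕ} (x y : Fin N → ℂ) : ℂ := ∑ i, conj (x i) * y i

lemma herm_smul_right {N : ℕ} (x y : Fin N → ℂ) (α : ℂ) :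
    herm x (α • y) = α * herm x y := by
  simp only [herm, Pi.smul_apply, smul_eq_mul, Finset.mul_sum, mul_left_comm]

lemma herm_add_right {N : ℕ} (x y z : Fin N → ℂ) :
    herm x (y + z) = herm x y + herm x z := by
  simp only [herm, Pi.add_apply, mul_add, Finset.sum_add_distrib]

lemma conj_herm {N : ℕ} (x y : Fin N → ℂ) : conj (herm x y) = herm y x := by
  simp only [herm, map_sum, map_mul, Complex.conj_conj, mul_comm]

namespace Complex

lemma arg_div_eq_zero_iff (x y : ℂ) :
    arg (x / y) = 0 ↔ 0 ≤ (x * conj y).re ∧ (x * conj y).im = 0 := by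
  rcases eq_or_ne y 0 with rfl | hy
  · simp
  have hpos : 0 < (normSq y)⁻¹ := inv_pos.mpr (normSq_pos.mpr hy)
  rw [div_eq_mul_inv, inv_def, ← mul_assoc, arg_eq_zero_iff, re_mul_ofReal, im_mul_ofReal,
    mul_nonneg_iff_of_pos_right hpos, mul_eq_zero, or_iff_left hpos.ne']

lemma zero_mem_segment_iff (x y : ℂ) :
    (0 : ℂ) ∈ segment ℝ x y ↔ (x * conj y).re ≤ 0 ∧ (x * conj y).im = 0 := by
  rw [mem_segment_iff_sameRay, zero_sub, sub_zero, sameRay_iff_arg_div_eq_zero,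
    arg_div_eq_zero_iff, neg_mul, neg_re, neg_im, neg_nonneg, neg_eq_zero]

end Complex

theorem stmt_1_general {N : ℕ} (e p q : Fin N → ℂ)
    (hpq : herm p q ≠ 0) :
    (∃ t ∈ Set.Icc (0 : ℝ) 1,
        herm e (((1 - t : ℝ) : ℂ) • herm p q • p
          + ((t : ℝ) : ℂ) • ((‖herm p q‖ ^ 2 : ℝ) : ℂ) • q) = 0)
      ↔ (herm e p * herm p q * herm q e).re ≤ 0
          ∧ (herm e p * herm p q * herm q e).im = 0 := by
  set r : ℝ := ‖herm p q‖ ^ 2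
  have hr : 0 < r := by positivity
  have hcurve : ∀ t : ℝ, herm e (((1 - t : ℝ) : ℂ) • herm p q • p + ((t : ℝ) : ℂ) • (r : ℂ) • q)
      = (1 - t) • (herm p q * herm e p) + t • (r * herm e q) := by
    intro t
    simp only [herm_add_right, herm_smul_right, Complex.real_smul]
  have hprod : herm p q * herm e p * conj (r * herm e q)
      = r * (herm e p * herm p q * herm q e) := by
    rw [map_mul, Complex.conj_ofReal, conj_herm]
    ring
  calc _ ↔ (0 : ℂ) ∈ segment ℝ (herm p q * herm e p) (r * herm e q) := by
        simp only [segment_eq_image, Set.mem_image, hcurve, eq_comm]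
    _ ↔ _ := by
        rw [Complex.zero_mem_segment_iff, hprod, Complex.re_ofReal_mul, Complex.im_ofReal_mul]
        exact and_congr (smul_nonpos_iff_nonpos_of_pos_left hr) (mul_eq_zero_iff_left hr.ne')

/-- Lemma 1 of the paper: the geodesic from [p] to [q] meets the hyperplane
orthogonal to e iff the triple product ⟨e,p⟩⟨p,q⟩⟨q,e⟩ has nonpositive real
part and vanishing imaginary part. -/
theorem stmt_1 {N : ℕ} (e p q : Fin N → ℂ)
    (he : herm e e = 1) (hp : herm p p = 1) (hq : herm q q = 1)
    (hpq : herm p q ≠ 0) :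
    (∃ t ∈ Set.Icc (0 : ℝ) 1,
        herm e (((1 - t : ℝ) : ℂ) • herm p q • p
          + ((t : ℝ) : ℂ) • ((‖herm p q‖ ^ 2 : ℝ) : ℂ) • q) = 0)
      ↔ (herm e p * herm p q * herm q e).re ≤ 0
          ∧ (herm e p * herm p q * herm q e).im = 0 :=
  stmt_1_general e p q hpq
end

section
/- Let φ₀, φ₁, φ₂, φ₃ be unit vectors in ℂ^N and U₀₁, U₁₂, U₂₃, U₁₃ ∈ U(N). Define φ_IB(s) = s²·⟨φ₀, U₀₁φ₁⟩·⟨φ₁, U₁₂U₂₃φ₃⟩·⟨U₀₁U₁₂U₂₃φ₃, φ₀⟩ + (1-s)²·⟨φ₀, U₀₁φ₁⟩·⟨φ₁, U₁₃φ₃⟩·⟨U₀₁U₁₃φ₃, φ₀⟩ + s(1-s)·⟨φ₀, U₀₁φ₁⟩·(⟨φ₁, U₁₂U₂₃φ₃⟩·⟨U₀₁U₁₃φ₃, φ₀⟩ + ⟨φ₁, U₁₃φ₃⟩·⟨U₀₁U₁₂U₂₃φ₃, φ₀⟩). Then φ_IB(s) is invariant under gauge transformations φᵢ ↦ gᵢφᵢ,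 U_{ij} ↦ gᵢU_{ij}gⱼ* for unitaries g₀, g₁, g₂, g₃. -/
open scoped ComplexConjugate

/-- The function φ_IB of Eq. (IB) of the paper (U_{ijk...} := U_{ij}U_{jk}⋯). -/
noncomputable def phiIB {N : ℕ} (φ0 φ1 φ3 : Fin N → ℂ)
    (U01 U12 U13 U23 : Matrix (Fin N) (Fin N) ℂ) (s : ℝ) : ℂ :=
  ((s : ℝ) : ℂ) ^ 2 * herm φ0 (U01.mulVec φ1)
      * herm φ1 ((U12 * U23).mulVec φ3) * herm ((U01 * U12 * U23).mulVec φ3) φ0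
    + ((1 - s : ℝ) : ℂ) ^ 2 * herm φ0 (U01.mulVec φ1)
      * herm φ1 (U13.mulVec φ3) * herm ((U01 * U13).mulVec φ3) φ0
    + ((s : ℝ) : ℂ) * ((1 - s : ℝ) : ℂ) * herm φ0 (U01.mulVec φ1)
      * (herm φ1 ((U12 * U23).mulVec φ3) * herm ((U01 * U13).mulVec φ3) φ0
          + herm φ1 (U13.mulVec φ3) * herm ((U01 * U12 * U23).mulVec φ3) φ0)

/-! Every factor of `phiIB` is an inner product whose gauge factors cancel: along a product of
gauged links `(gᵢ Uᵢⱼ gⱼ*) (gⱼ Uⱼₖ gₖ*)` the inner `gⱼ* gⱼ` telescope away, the last `gₖ*` meets the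
gauged vector `gₖ φₖ`, and the remaining `gᵢ` on both sides of `⟨·,·⟩` drops out because `gᵢ` is
an isometry. -/

section Herm

open Matrix

variable {N : ℕ}

theorem herm_eq_star_dotProduct (x y : Fin N → ℂ) : herm x y = star x ⬝ᵥ y := rfl

theorem herm_mulVec_mulVec_of_star_mul_self {g : Matrix (Fin N) (Fin N) ℂ} (hg : star g * g = 1)
    (x y : Fin N → ℂ) : herm (g *ᵥ x) (g *ᵥ y) = herm x y := by
  rw [herm_eq_star_dotProduct, herm_eq_star_dotProduct, star_mulVec, dotProduct_mulVec,
    vecMul_vecMul, ← star_eq_conjTranspose, hg, vecMul_one]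

end Herm

namespace Matrix

variable {n : Type*} [Fintype n] [DecidableEq n] {R : Type*} [Semiring R] [Star R]

theorem mul_mul_star_mulVec_mulVec_of_star_mul_self {h : Matrix n n R} (hh : star h * h = 1)
    (g M : Matrix n n R) (y : n → R) : (g * M * star h) *ᵥ (h *ᵥ y) = g *ᵥ (M *ᵥ y) := by
  rw [mulVec_mulVec, mul_assoc, mul_assoc, hh, mul_one, ← mulVec_mulVec]

theorem mul_mul_star_mul_mul_mul_star_of_star_mul_self {h : Matrix n n R} (hh : star h * h = 1)
    (g k A B : Matrix n n R) : (g * A * star h) * (h * B * star k) = g * (A * B) * star k := by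
  simp only [mul_assoc]
  rw [← mul_assoc (star h) h, hh, one_mul]

end Matrix

open Matrix in
theorem stmt_13_general {N : ℕ} (φ0 φ1 φ3 : Fin N → ℂ)
    (U01 U12 U13 U23 : Matrix (Fin N) (Fin N) ℂ)
    (g0 g1 g2 g3 : Matrix (Fin N) (Fin N) ℂ)
    (hg0 : g0 ∈ Matrix.unitaryGroup (Fin N) ℂ)
    (hg1 : g1 ∈ Matrix.unitaryGroup (Fin N) ℂ)
    (hg2 : g2 ∈ Matrix.unitaryGroup (Fin N) ℂ)
    (hg3 : g3 ∈ Matrix.unitaryGroup (Fin N) ℂ) :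
    ∀ s : ℝ,
      phiIB (g0.mulVec φ0) (g1.mulVec φ1) (g3.mulVec φ3)
          (g0 * U01 * star g1) (g1 * U12 * star g2)
          (g1 * U13 * star g3) (g2 * U23 * star g3) s
        = phiIB φ0 φ1 φ3 U01 U12 U13 U23 s := by
  intro s
  have path123 : (g1 * U12 * star g2) * (g2 * U23 * star g3) = g1 * (U12 * U23) * star g3 :=
    mul_mul_star_mul_mul_mul_star_of_star_mul_self hg2.1 g1 g3 U12 U23
  have path0123 : (g0 * U01 * star g1) * (g1 * U12 * star g2) * (g2 * U23 * star g3)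
      = g0 * (U01 * U12 * U23) * star g3 := by
    rw [mul_assoc, path123, mul_mul_star_mul_mul_mul_star_of_star_mul_self hg1.1, ← mul_assoc U01]
  have path013 : (g0 * U01 * star g1) * (g1 * U13 * star g3) = g0 * (U01 * U13) * star g3 :=
    mul_mul_star_mul_mul_mul_star_of_star_mul_self hg1.1 g0 g3 U01 U13
  simp only [phiIB, path123, path0123, path013,
    mul_mul_star_mulVec_mulVec_of_star_mul_self hg1.1,
    mul_mul_star_mulVec_mulVec_of_star_mul_self hg3.1,
    herm_mulVec_mulVec_of_star_mul_self hg0.1, herm_mulVec_mulVec_of_star_mul_self hg1.1]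

/-- Gauge invariance of φ_IB under φᵢ ↦ gᵢφᵢ, U_{ij} ↦ gᵢ U_{ij} gⱼ*. -/
theorem stmt_13 {N : ℕ} (φ0 φ1 φ2 φ3 : Fin N → ℂ)
    (h0 : herm φ0 φ0 = 1) (h1 : herm φ1 φ1 = 1) (h2 : herm φ2 φ2 = 1)
    (h3 : herm φ3 φ3 = 1)
    (U01 U12 U13 U23 : Matrix (Fin N) (Fin N) ℂ)
    (hU01 : U01 ∈ Matrix.unitaryGroup (Fin N) ℂ)
    (hU12 : U12 ∈ Matrix.unitaryGroup (Fin N) ℂ)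
    (hU13 : U13 ∈ Matrix.unitaryGroup (Fin N) ℂ)
    (hU23 : U23 ∈ Matrix.unitaryGroup (Fin N) ℂ)
    (g0 g1 g2 g3 : Matrix (Fin N) (Fin N) ℂ)
    (hg0 : g0 ∈ Matrix.unitaryGroup (Fin N) ℂ)
    (hg1 : g1 ∈ Matrix.unitaryGroup (Fin N) ℂ)
    (hg2 : g2 ∈ Matrix.unitaryGroup (Fin N) ℂ)
    (hg3 : g3 ∈ Matrix.unitaryGroup (Fin N) ℂ) :
    ∀ s : ℝ,
      phiIB (g0.mulVec φ0) (g1.mulVec φ1) (g3.mulVec φ3)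
          (g0 * U01 * star g1) (g1 * U12 * star g2)
          (g1 * U13 * star g3) (g2 * U23 * star g3) s
        = phiIB φ0 φ1 φ3 U01 U12 U13 U23 s :=
  stmt_13_general φ0 φ1 φ3 U01 U12 U13 U23 g0 g1 g2 g3 hg0 hg1 hg2 hg3
end

section
/- Let e, q, r, p₀ ∈ ℂ^N be unit vectors with ⟨q,r⟩ ≠ 0, and suppose V(s) = s·W₁ + (1-s)·W₂ with W₁, W₂ ∈ U(N) and V(s)p₀ ≠ 0 for all s ∈ [0,1]. Let x(u) = (1-u)⟨q,r⟩q + u|⟨q,r⟩|²r for u ∈ [0,1]. Then ⟨V(s)p₀, x(u)⟩ = 0 for some u ∈ [0,1] if and only if Im(⟨q,r⟩⟨r,V(s)p₀⟩⟨V(s)p₀,q⟩) = 0 and Re(⟨q,r⟩⟨r,V(s)p₀⟩⟨V(s)p₀,q⟩) ≤ 0. -/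
open scoped ComplexConjugate

noncomputable def interpVec {N : ℕ} (W1 W2 : Matrix (Fin N) (Fin N) ℂ)
    (p0 : Fin N → ℂ) (s : ℝ) : Fin N → ℂ :=
  (((s : ℝ) : ℂ) • W1 + ((1 - s : ℝ) : ℂ) • W2).mulVec p0

lemma herm_add {N : ℕ} (w x y : Fin N → ℂ) : herm w (x + y) = herm w x + herm w y := by
  simp [herm, mul_add, Finset.sum_add_distrib]

lemma herm_smul {N : ℕ} (w x : Fin N → ℂ) (a : ℂ) : herm w (a • x) = a * herm w x := by
  simp only [herm, Pi.smul_apply, smul_eq_mul, Finset.mul_sum]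
  exact Finset.sum_congr rfl (fun i _ => by ring)

lemma herm_conj {N : ℕ} (x y : Fin N → ℂ) : herm x y = conj (herm y x) := by
  simp only [herm, map_sum, map_mul, Complex.conj_conj]
  exact Finset.sum_congr rfl (fun i _ => by ring)

lemma key_iff {N : ℕ} (q r w : Fin N → ℂ) (hqr : herm q r ≠ 0) :
    (∃ u ∈ Set.Icc (0 : ℝ) 1,
        herm w
          (((1 - u : ℝ) : ℂ) • herm q r • q
            + ((u : ℝ) : ℂ) • ((‖herm q r‖ ^ 2 : ℝ) : ℂ) • r) = 0)
      ↔ (herm q r * herm r w * herm w q).im = 0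
          ∧ (herm q r * herm r w * herm w q).re ≤ 0 := by
  set c := herm q r with hc
  set A := herm w q with hA
  set B := herm w r with hB
  have hrw : herm r w = conj B := herm_conj r w
  have hnc : (0:ℝ) < Complex.normSq c := by
    simpa [Complex.normSq_pos] using hqr
  have habs : ((‖c‖ ^ 2 : ℝ) : ℂ) = (Complex.normSq c : ℂ) := by
    rw [Complex.sq_norm]
  have hBc : B * conj B = (Complex.normSq B : ℂ) := Complex.mul_conj B
  have hform : ∀ u : ℝ,
      herm w (((1 - u : ℝ) : ℂ) • c • q
        + ((u : ℝ) : ℂ) • ((‖c‖ ^ 2 : ℝ) : ℂ) • r)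
      = ((1 - u : ℝ) : ℂ) * c * A + ((u : ℝ) : ℂ) * (Complex.normSq c : ℂ) * B := by
    intro u
    rw [herm_add, herm_smul, herm_smul, herm_smul, herm_smul, habs, ← hA, ← hB]
    ring
  rw [hrw]
  set ψ : ℂ := c * conj B * A with hψ
  by_cases hB0 : B = 0
  · constructor
    · intro _
      simp [hψ, hB0]
    · intro _
      refine ⟨1, by norm_num, ?_⟩
      rw [hform]
      simp [hB0]
  · have hnb : (0:ℝ) < Complex.normSq B := by simpa [Complex.normSq_pos] using hB0
    constructor
    · rintro ⟨u, ⟨hu0, hu1⟩, heq⟩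
      rw [hform] at heq
      have h2 : ((1 - u : ℝ) : ℂ) * ψ
          + (((u * Complex.normSq c * Complex.normSq B : ℝ)) : ℂ) = 0 := by
        have heq' := heq
        push_cast at heq'
        rw [hψ]
        push_cast
        linear_combination (conj B) * heq' - ((u:ℂ) * (Complex.normSq c : ℂ)) * hBc
      have him : (1 - u) * ψ.im = 0 := by
        have h := congrArg Complex.im h2
        simp only [Complex.add_im, Complex.mul_im, Complex.ofReal_re, Complex.ofReal_im,
          Complex.zero_im, Complex.ofReal_im, zero_mul, mul_zero, add_zero, zero_add] at h
        linarith
      have hre : (1 - u) * ψ.re + u * Complex.normSq c * Complex.normSq B = 0 := by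
        have h := congrArg Complex.re h2
        simp only [Complex.add_re, Complex.mul_re, Complex.ofReal_re, Complex.ofReal_im,
          Complex.zero_re, zero_mul, mul_zero, sub_zero, add_zero] at h
        linarith
      have hune : u ≠ 1 := by
        intro h
        rw [h] at hre
        nlinarith
      have hα : 0 < 1 - u := lt_of_le_of_ne (by linarith) (by intro h; apply hune; linarith)
      constructor
      · rcases mul_eq_zero.mp him with h | h
        · exact absurd h (ne_of_gt hα)
        · exact h
      · by_contra hpos
        push_neg at hpos
        nlinarith [mul_pos hα hpos, mul_nonneg (mul_nonneg hu0 hnc.le) hnb.le]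
    · rintro ⟨him, hre⟩
      have hψr : c * A * conj B = (ψ.re : ℂ) := by
        rw [show c * A * conj B = ψ by rw [hψ]; ring]
        exact (Complex.ext (by simp) (by simp [him])).symm
      set a : ℝ := -ψ.re with ha
      have ha0 : 0 ≤ a := by simp only [ha]; linarith
      set nb := Complex.normSq B with hnbdef
      set nc := Complex.normSq c with hncdef
      have hψr2 : c * A * conj B = -((a : ℝ) : ℂ) := by
        rw [hψr, ha]; push_cast; ring
      set u : ℝ := (a / nb) / (a / nb + nc) with hu
      have hden : 0 < a / nb + nc := by positivity
      refine ⟨u, ⟨by positivity, ?_⟩, ?_⟩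
      · rw [hu, div_le_one hden]
        nlinarith [div_nonneg ha0 hnb.le]
      · rw [hform]
        have hcB : (conj B : ℂ) ≠ 0 := by simpa using hB0
        have step : (((1 - u : ℝ) : ℂ) * c * A + ((u : ℝ) : ℂ) * (nc : ℂ) * B) * conj B
            = (((1 - u) * (-a) + u * nc * nb : ℝ) : ℂ) := by
          push_cast
          linear_combination (1 - (u:ℂ)) * hψr2 + ((u:ℂ) * (nc:ℂ)) * hBc
        have hreal : (1 - u) * (-a) + u * nc * nb = 0 := by
          rw [hu]
          field_simp
          ring
        have key : (((1 - u : ℝ) : ℂ) * c * A + ((u : ℝ) : ℂ) * (nc : ℂ) * B) * conj B = 0 := by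
          rw [step, hreal]; norm_num
        rcases mul_eq_zero.mp key with h | h
        · exact h
        · exact absurd h hcB

/-- Case (II) of the paper: the geodesic arc from [q] to [r] intersects the
hyperplane orthogonal to w := V(s)p₀ (with V(s) = s·W₁ + (1-s)·W₂ nonsingular
on p₀) if and only if the gauge-invariant triple product ⟨q,r⟩⟨r,w⟩⟨w,q⟩ has
vanishing imaginary part and nonpositive real part. -/
theorem stmt_19 {N : ℕ} (e q r p0 : Fin N → ℂ)
    (he : herm e e = 1) (hq : herm q q = 1) (hr : herm r r = 1)
    (hp0 : herm p0 p0 = 1) (hqr : herm q r ≠ 0)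
    (W1 W2 : Matrix (Fin N) (Fin N) ℂ)
    (hW1 : W1 ∈ Matrix.unitaryGroup (Fin N) ℂ)
    (hW2 : W2 ∈ Matrix.unitaryGroup (Fin N) ℂ)
    (hVn0 : ∀ s ∈ Set.Icc (0 : ℝ) 1, interpVec W1 W2 p0 s ≠ 0)
    (s : ℝ) (hs : s ∈ Set.Icc (0 : ℝ) 1) :
    (∃ u ∈ Set.Icc (0 : ℝ) 1,
        herm (interpVec W1 W2 p0 s)
          (((1 - u : ℝ) : ℂ) • herm q r • q
            + ((u : ℝ) : ℂ) • ((‖herm q r‖ ^ 2 : ℝ) : ℂ) • r) = 0)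
      ↔ (herm q r * herm r (interpVec W1 W2 p0 s)
            * herm (interpVec W1 W2 p0 s) q).im = 0
          ∧ (herm q r * herm r (interpVec W1 W2 p0 s)
            * herm (interpVec W1 W2 p0 s) q).re ≤ 0 := by
  exact key_iff q r (interpVec W1 W2 p0 s) hqr
end
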